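/- Let A = ℤ[[t]] with ideal I = tℤ[[t]], and let k be any field. Consider K = k((t)) with its t-adic valuation, valuation ring O_K = k[[t]], and its natural L_DP-structure. Then for every choice of an element u of the maximal ideal M_K, there is exactly one analytic A-structure (σ_m)_{m≥0} on K with σ_0(t) = u. -/

import Mathlib

/-!
Existence: `k⟦t⟧` is `t`-adically complete, so the ring map `ℤ⟦t⟧ → k⟦t⟧` substituting `u`
for `t`, followed by evaluation of the variables `ξ_i` at a point of `k⟦t⟧^m`, extends from
`ℤ⟦t⟧[ξ]` to its completion `A_m` by the universal property of adic completions.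

Uniqueness: `σ_m` sends `t^j A_m` into `M^j`, so modulo `M^j` the value of `σ_m f` only depends
on a polynomial `p ∈ ℤ⟦t⟧[ξ]` with `f ≡ p mod t^j`. A ring map from `ℤ⟦t⟧` to `O/M^j` is
determined by the image of `t`, because that image is nilpotent; as `ξ_i` goes to the `i`-th
coordinate, two structures with the same `σ_0(t)` agree modulo every `M^j`, hence agree,
since `⋂ M^j = 0` in `k⟦t⟧`.
-/

open scoped Classical
open MeasureTheory

noncomputable section
section Analytic

set_option maxHeartbeats 1000000 in
set_option synthInstance.maxHeartbeats 200000 in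
/-- The ideal generated by `I` in the polynomial ring `A[ξ_1,…,ξ_m]`. -/
def polyI (A : Type) [CommRing A] (I : Ideal A) (m : ℕ) : Ideal (MvPolynomial (Fin m) A) :=
  I.map MvPolynomial.C

variable (A : Type) [CommRing A] (I : Ideal A)

set_option maxHeartbeats 1000000 in
set_option synthInstance.maxHeartbeats 400000 in
/-- The `I`-adic completion of `A[ξ_1,…,ξ_m]`, realized as the subring of compatible
sequences in the product of the quotients modulo the powers of the ideal generated
by `I`. -/
def AmSub (m : ℕ) : Subring (∀ k : ℕ, MvPolynomial (Fin m) A ⧸ (polyI A I m ^ k)) where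
  carrier := {f | ∀ k : ℕ, Ideal.Quotient.factor
    (Ideal.pow_le_pow_right (Nat.le_succ k)) (f (k + 1)) = f k}
  zero_mem' := fun k => map_zero _
  one_mem' := fun k => map_one _
  add_mem' := fun hf hg k => by
    rw [Pi.add_apply, map_add, hf k, hg k]; rfl
  neg_mem' := fun hf k => by
    rw [Pi.neg_apply, map_neg, hf k]; rfl
  mul_mem' := fun hf hg k => by
    rw [Pi.mul_apply, map_mul, hf k, hg k]; rfl

/-- `A_m`, the `I`-adic completion of the polynomial ring `A[ξ_1,…,ξ_m]`. -/
abbrev Am (m : ℕ) : Type := ↥(AmSub A I m)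

set_option maxHeartbeats 1000000 in
set_option synthInstance.maxHeartbeats 400000 in
/-- The canonical map from the polynomial ring to its completion. -/
def toAm (m : ℕ) : MvPolynomial (Fin m) A →+* Am A I m where
  toFun p := ⟨fun _ => Ideal.Quotient.mk _ p, fun k => Ideal.Quotient.factor_mk _ p⟩
  map_one' := Subtype.ext (funext fun _ => map_one (Ideal.Quotient.mk _))
  map_mul' p q := Subtype.ext (funext fun _ => map_mul (Ideal.Quotient.mk _) p q)
  map_zero' := Subtype.ext (funext fun _ => map_zero (Ideal.Quotient.mk _))
  map_add' p q := Subtype.ext (funext fun _ => map_add (Ideal.Quotient.mk _) p q)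

/-- The inclusion `A[ξ_1,…,ξ_m] → A[ξ_1,…,ξ_{m+1}]`, as a ring homomorphism. -/
def rnHom (m : ℕ) : MvPolynomial (Fin m) A →+* MvPolynomial (Fin (m + 1)) A :=
  (MvPolynomial.rename (Fin.castSucc : Fin m → Fin (m + 1))).toRingHom

lemma rnHom_polyI_pow (m k : ℕ) :
    (polyI A I m) ^ k ≤ ((polyI A I (m + 1)) ^ k).comap (rnHom A m) := by
  rw [← Ideal.map_le_iff_le_comap, Ideal.map_pow]
  refine Ideal.pow_right_mono ?_ k
  rw [polyI, Ideal.map_map]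
  refine le_of_eq ?_
  congr 1
  exact RingHom.ext fun a => MvPolynomial.rename_C _ a

set_option maxHeartbeats 1000000 in
set_option synthInstance.maxHeartbeats 400000 in
/-- The extension map `A_m → A_{m+1}` induced by the inclusion of polynomial rings. -/
def liftRename (m : ℕ) : Am A I m →+* Am A I (m + 1) where
  toFun f := ⟨fun k => Ideal.quotientMap _ (rnHom A m) (rnHom_polyI_pow A I m k) (f.1 k), by
    intro k
    show Ideal.Quotient.factor _
        (Ideal.quotientMap _ (rnHom A m) (rnHom_polyI_pow A I m (k + 1)) (f.1 (k + 1)))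
      = Ideal.quotientMap _ (rnHom A m) (rnHom_polyI_pow A I m k) (f.1 k)
    rw [← f.2 k]
    obtain ⟨p, hp⟩ := Ideal.Quotient.mk_surjective (f.1 (k + 1))
    rw [← hp, Ideal.quotientMap_mk, Ideal.Quotient.factor_mk, Ideal.Quotient.factor_mk,
      Ideal.quotientMap_mk]⟩
  map_one' := Subtype.ext (funext fun _ => map_one (Ideal.quotientMap _ _ _))
  map_mul' f g := Subtype.ext (funext fun k =>
    map_mul (Ideal.quotientMap _ (rnHom A m) (rnHom_polyI_pow A I m k)) (f.1 k) (g.1 k))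
  map_zero' := Subtype.ext (funext fun _ => map_zero (Ideal.quotientMap _ _ _))
  map_add' f g := Subtype.ext (funext fun k =>
    map_add (Ideal.quotientMap _ (rnHom A m) (rnHom_polyI_pow A I m k)) (f.1 k) (g.1 k))

set_option maxHeartbeats 1000000 in
set_option synthInstance.maxHeartbeats 400000 in
/-- An analytic `A`-structure (Definition 2.8 of the paper) on a field `K` with a
distinguished subring `O` (the valuation ring) and an ideal `M ⊆ O` (the maximal
ideal): ring homomorphisms `σ_m` from `A_m` to the ring of `O`-valued functions on
`O^m`, sending `I` into `M`, sending `ξ_i` to the `i`-th coordinate function, and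
compatible with the inclusions `A_m → A_{m+1}`. -/
structure AnalyticAStructure (K : Type) [Field K] (O : Subring K) (Mx : Ideal O) where
  (σ : ∀ m : ℕ, Am A I m →+* ((Fin m → O) → O))
  (mem_max : ∀ a ∈ I, ∀ v, σ 0 (toAm A I 0 (MvPolynomial.C a)) v ∈ Mx)
  (coord : ∀ (m : ℕ) (i : Fin m) (v), σ m (toAm A I m (MvPolynomial.X i)) v = v i)
  (extends_ : ∀ (m : ℕ) (f : Am A I m) (v : Fin (m + 1) → O),
    σ (m + 1) (liftRename A I m f) v = σ m f (v ∘ Fin.castSucc))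

end Analytic
section LaurentSeriesStructure

variable (k : Type) [Field k]

/-- The valuation ring `k[[t]]` of the Laurent series field `k((t))`, as the range of
the inclusion of power series. -/
def laurentO : Subring (LaurentSeries k) := (HahnSeries.ofPowerSeries ℤ k).range

set_option maxHeartbeats 1000000 in
set_option synthInstance.maxHeartbeats 400000 in
/-- The maximal ideal of `k[[t]] ⊆ k((t))`: power series with zero constant term. -/
def laurentM : Ideal (laurentO k) where
  carrier := {x | ∃ p : PowerSeries k, PowerSeries.constantCoeff (R := k) p = 0 ∧
    HahnSeries.ofPowerSeries ℤ k p = (x : LaurentSeries k)}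
  zero_mem' := ⟨0, by simp, by simp⟩
  add_mem' := by
    rintro a b ⟨p, hp0, hp⟩ ⟨q, hq0, hq⟩
    exact ⟨p + q, by simp [hp0, hq0], by push_cast [map_add, hp, hq]; ring⟩
  smul_mem' := by
    rintro c x ⟨p, hp0, hp⟩
    obtain ⟨q, hq⟩ := RingHom.mem_range.mp c.2
    refine ⟨q * p, by simp [hp0], ?_⟩
    rw [map_mul, hq, hp, smul_eq_mul]
    rfl

theorem IsHausdorff.eq_of_forall_mk_pow_eq {R : Type*} [CommRing R] (J : Ideal R)
    [IsHausdorff J R] {x y : R}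
    (h : ∀ n, Ideal.Quotient.mk (J ^ n) x = Ideal.Quotient.mk (J ^ n) y) : x = y :=
  congrFun (IsHausdorff.funext' J (f := fun _ : Unit ↦ x) (g := fun _ ↦ y) fun n _ ↦ h n) ()

theorem PowerSeries.ringHom_ext_of_isNilpotent {R : Type*} [Ring R]
    {φ ψ : PowerSeries ℤ →+* R} (hX : φ X = ψ X) (hnil : IsNilpotent (φ X)) : φ = ψ := by
  obtain ⟨n, hn⟩ := hnil
  have hpoly : φ.comp Polynomial.coeToPowerSeries.ringHom =
      ψ.comp Polynomial.coeToPowerSeries.ringHom :=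
    Polynomial.ringHom_ext' (RingHom.ext_int _ _) (by simpa using hX)
  refine RingHom.ext fun f ↦ ?_
  rw [eq_X_pow_mul_shift_add_trunc n f]
  simp only [map_add, map_mul, map_pow, ← hX, hn, zero_mul, zero_add]
  exact RingHom.congr_fun hpoly _

theorem PowerSeries.span_X_le_comap_substAlgHom {R S : Type*} [CommRing R] [CommRing S]
    [Algebra R S] {w : PowerSeries S} (hw : constantCoeff w = 0) :
    Ideal.span {X} ≤ (Ideal.span {X}).comap
      (substAlgHom (R := R) (HasSubst.of_constantCoeff_zero' hw)).toRingHom := by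
  rw [Ideal.span_le, Set.singleton_subset_iff]
  simp [substAlgHom_X, Ideal.mem_span_singleton, X_dvd_iff, hw]

theorem polyI_le_comap_eval₂Hom {A B : Type} [CommRing A] [CommRing B] {I : Ideal A}
    {J : Ideal B} {ψ : A →+* B} (hψ : I ≤ J.comap ψ) {m : ℕ} (b : Fin m → B) :
    polyI A I m ≤ J.comap (MvPolynomial.eval₂Hom ψ b) := by
  rw [polyI, Ideal.map_le_iff_le_comap, Ideal.comap_comap, MvPolynomial.eval₂Hom_comp_C]
  exact hψ

namespace Am

variable {A : Type} [CommRing A] {I : Ideal A} {m : ℕ}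

theorem factor_apply_of_le (f : Am A I m) {i j : ℕ} (h : i ≤ j) :
    Ideal.Quotient.factor (Ideal.pow_le_pow_right h) (f.1 j) = f.1 i :=
  (Ideal.Quotient.eq_factor_of_eq_factor_succ (fun _ _ h ↦ Ideal.pow_le_pow_right h) f.1
    (fun n ↦ (f.2 n).symm) h).symm

def proj (n : ℕ) : Am A I m →+* MvPolynomial (Fin m) A ⧸ polyI A I m ^ n :=
  (Pi.evalRingHom _ n).comp (AmSub A I m).subtype

@[simp]
theorem proj_apply (f : Am A I m) (n : ℕ) : proj n f = f.1 n := rfl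

@[simp]
theorem proj_toAm (p : MvPolynomial (Fin m) A) (n : ℕ) :
    proj n (toAm A I m p) = Ideal.Quotient.mk _ p := rfl

section Lift

variable {B : Type} [CommRing B] (J : Ideal B) {φ : MvPolynomial (Fin m) A →+* B}

theorem polyI_pow_le_comap (hφ : polyI A I m ≤ J.comap φ) (n : ℕ) :
    polyI A I m ^ n ≤ (J ^ n).comap φ := by
  rw [← Ideal.map_le_iff_le_comap, Ideal.map_pow]
  exact Ideal.pow_right_mono (Ideal.map_le_iff_le_comap.mpr hφ) n

def liftQuotient (φ : MvPolynomial (Fin m) A →+* B) (hφ : polyI A I m ≤ J.comap φ) (n : ℕ) :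
    Am A I m →+* B ⧸ J ^ n :=
  (Ideal.quotientMap (J ^ n) φ (polyI_pow_le_comap J hφ n)).comp (proj n)

theorem factorPow_comp_liftQuotient (hφ : polyI A I m ≤ J.comap φ) {n n' : ℕ} (h : n ≤ n') :
    (Ideal.Quotient.factorPow J h).comp (liftQuotient J φ hφ n') = liftQuotient J φ hφ n := by
  ext f
  obtain ⟨p, hp⟩ := Ideal.Quotient.mk_surjective (f.1 n')
  simp only [liftQuotient, RingHom.comp_apply, proj_apply, ← factor_apply_of_le f h, ← hp,
    Ideal.quotientMap_mk, Ideal.Quotient.factor_mk]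

def lift [IsAdicComplete J B] (φ : MvPolynomial (Fin m) A →+* B)
    (hφ : polyI A I m ≤ J.comap φ) : Am A I m →+* B :=
  IsAdicComplete.liftRingHom J (liftQuotient J φ hφ) (factorPow_comp_liftQuotient J hφ)

variable [IsAdicComplete J B]

theorem lift_toAm (hφ : polyI A I m ≤ J.comap φ) (p : MvPolynomial (Fin m) A) :
    lift J φ hφ (toAm A I m p) = φ p :=
  IsHausdorff.eq_of_forall_mk_pow_eq J fun n ↦ by
    rw [lift, IsAdicComplete.mk_liftRingHom, liftQuotient, RingHom.comp_apply, proj_toAm,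
      Ideal.quotientMap_mk]

theorem lift_liftRename {φ : MvPolynomial (Fin (m + 1)) A →+* B}
    {φ' : MvPolynomial (Fin m) A →+* B} (hφ : polyI A I (m + 1) ≤ J.comap φ)
    (hφ' : polyI A I m ≤ J.comap φ') (hcomp : φ.comp (rnHom A m) = φ') (f : Am A I m) :
    lift J φ hφ (liftRename A I m f) = lift J φ' hφ' f := by
  subst hcomp
  refine RingHom.congr_fun (IsAdicComplete.eq_liftRingHom J _ _
    ((lift J φ hφ).comp (liftRename A I m)) fun n ↦ ?_) f
  ext f
  obtain ⟨p, hp⟩ := Ideal.Quotient.mk_surjective (f.1 n)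
  simp only [RingHom.comp_apply, lift, IsAdicComplete.mk_liftRingHom, liftQuotient, proj_apply]
  show Ideal.quotientMap _ φ _ (Ideal.quotientMap _ (rnHom A m) _ (f.1 n)) = _
  rw [← hp, Ideal.quotientMap_mk, Ideal.quotientMap_mk, Ideal.quotientMap_mk]
  rfl

end Lift

theorem liftRename_toAm (p : MvPolynomial (Fin m) A) :
    liftRename A I m (toAm A I m p) = toAm A I (m + 1) (MvPolynomial.rename Fin.castSucc p) :=
  Subtype.ext (funext fun _ ↦ Ideal.quotientMap_mk)

section Principal

variable {a : A}

theorem mem_polyI_span_singleton_pow {n : ℕ} {p : MvPolynomial (Fin m) A} :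
    p ∈ polyI A (Ideal.span {a}) m ^ n ↔ MvPolynomial.C a ^ n ∣ p := by
  rw [polyI, Ideal.map_span, Set.image_singleton, Ideal.span_singleton_pow,
    Ideal.mem_span_singleton]

variable [IsDomain A]

theorem mem_polyI_pow_of_C_pow_mul_mem (ha : a ≠ 0) {i j : ℕ} {p : MvPolynomial (Fin m) A}
    (h : MvPolynomial.C a ^ j * p ∈ polyI A (Ideal.span {a}) m ^ (j + i)) :
    p ∈ polyI A (Ideal.span {a}) m ^ i := by
  rw [mem_polyI_span_singleton_pow, pow_add] at h
  rw [mem_polyI_span_singleton_pow]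
  exact (mul_dvd_mul_iff_left (pow_ne_zero j (MvPolynomial.C_eq_zero.not.mpr ha))).mp h

theorem exists_toAm_C_pow_mul_eq (ha : a ≠ 0) {j : ℕ} (f : Am A (Ideal.span {a}) m)
    (hf : f.1 j = 0) :
    ∃ g : Am A (Ideal.span {a}) m, toAm A _ m (MvPolynomial.C a ^ j) * g = f := by
  choose p hp using fun i ↦ Ideal.Quotient.mk_surjective (f.1 (j + i))
  have hdvd (i : ℕ) : MvPolynomial.C a ^ j ∣ p i := by
    rw [← mem_polyI_span_singleton_pow, ← Ideal.Quotient.eq_zero_iff_mem,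
      ← Ideal.Quotient.factor_mk (Ideal.pow_le_pow_right (Nat.le_add_right j i)), hp,
      factor_apply_of_le f (Nat.le_add_right j i), hf]
  -- the `i`-th component of `g` is the quotient by `a ^ j` of a lift of `f_{j+i}`
  choose r hr using hdvd
  refine ⟨⟨fun i ↦ Ideal.Quotient.mk _ (r i), fun i ↦ ?_⟩, Subtype.ext (funext fun i ↦ ?_)⟩
  · have hp' : Ideal.Quotient.mk (polyI _ _ m ^ (j + i + 1)) (p (i + 1)) = f.1 (j + i + 1) :=
      hp (i + 1)
    rw [Ideal.Quotient.factor_mk, Ideal.Quotient.eq]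
    refine mem_polyI_pow_of_C_pow_mul_mem ha (j := j) ?_
    rw [mul_sub, ← hr, ← hr, ← Ideal.Quotient.eq, hp i,
      ← factor_apply_of_le f (Nat.le_add_right (j + i) 1), ← hp', Ideal.Quotient.factor_mk]
  · show Ideal.Quotient.mk _ (MvPolynomial.C a ^ j) * Ideal.Quotient.mk _ (r i) = f.1 i
    rw [← map_mul, ← hr, ← factor_apply_of_le f (Nat.le_add_left i j), ← hp i,
      Ideal.Quotient.factor_mk]

end Principal

end Am

namespace AnalyticAStructure

variable {A : Type} [CommRing A] {I : Ideal A} {K : Type} [Field K] {O : Subring K}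
  {Mx : Ideal O}

theorem sigma_toAm_C (S : AnalyticAStructure A I K O Mx) {m : ℕ} (a : A) (v : Fin m → O) :
    S.σ m (toAm A I m (MvPolynomial.C a)) v =
      S.σ 0 (toAm A I 0 (MvPolynomial.C a)) Fin.elim0 := by
  induction m with
  | zero => rw [Subsingleton.elim v Fin.elim0]
  | succ m ih =>
    rw [← MvPolynomial.rename_C Fin.castSucc, ← Am.liftRename_toAm, S.extends_, ih]

section Principal

variable [IsDomain A] {a : A}

theorem sigma_mem_pow_of_apply_eq_zero (ha : a ≠ 0)
    (S : AnalyticAStructure A (Ideal.span {a}) K O Mx) {m j : ℕ} {f : Am A _ m}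
    (hf : f.1 j = 0) (v : Fin m → O) : S.σ m f v ∈ Mx ^ j := by
  obtain ⟨g, rfl⟩ := Am.exists_toAm_C_pow_mul_eq ha f hf
  rw [map_pow, map_mul, map_pow, Pi.mul_apply, Pi.pow_apply, sigma_toAm_C]
  exact Ideal.mul_mem_right _ _
    (Ideal.pow_mem_pow (S.mem_max a (Ideal.mem_span_singleton_self a) _) j)

theorem sigma_sub_sigma_toAm_mem_pow (ha : a ≠ 0)
    (S : AnalyticAStructure A (Ideal.span {a}) K O Mx) {m j : ℕ} {f : Am A _ m}
    {p : MvPolynomial (Fin m) A} (hp : f.1 j = Ideal.Quotient.mk _ p) (v : Fin m → O) :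
    S.σ m f v - S.σ m (toAm A _ m p) v ∈ Mx ^ j := by
  rw [← Pi.sub_apply, ← map_sub]
  refine sigma_mem_pow_of_apply_eq_zero ha S ?_ v
  show f.1 j - Ideal.Quotient.mk _ p = 0
  rw [hp, sub_self]

end Principal

section OfIsAdicComplete

variable {B : Type} [CommRing B] (J : Ideal B)
  [IsAdicComplete J B] {ψ : A →+* B} (hψ : I ≤ J.comap ψ) (e : B ≃+* O) (he : J.map e ≤ Mx)

def ofIsAdicComplete : AnalyticAStructure A I K O Mx where
  σ m := RingHom.pi fun v ↦ (e : B →+* O).comp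
    (Am.lift J (MvPolynomial.eval₂Hom ψ (e.symm ∘ v)) (polyI_le_comap_eval₂Hom hψ _))
  mem_max a ha v := by
    rw [RingHom.pi_apply, RingHom.comp_apply, Am.lift_toAm, MvPolynomial.eval₂Hom_C]
    exact he (Ideal.mem_map_of_mem e (hψ ha))
  coord m i v := by
    rw [RingHom.pi_apply, RingHom.comp_apply, Am.lift_toAm, MvPolynomial.eval₂Hom_X']
    simp
  extends_ m f v := by
    rw [RingHom.pi_apply, RingHom.pi_apply, RingHom.comp_apply, RingHom.comp_apply,
      Am.lift_liftRename J _ _ (RingHom.ext fun p ↦ MvPolynomial.eval₂Hom_rename ..)]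
    rfl

theorem ofIsAdicComplete_sigma_toAm {m : ℕ} (p : MvPolynomial (Fin m) A) (v : Fin m → O) :
    (ofIsAdicComplete J hψ e he).σ m (toAm A I m p) v =
      e (MvPolynomial.eval₂Hom ψ (e.symm ∘ v) p) := by
  rw [ofIsAdicComplete, RingHom.pi_apply, RingHom.comp_apply, Am.lift_toAm]
  rfl

end OfIsAdicComplete

theorem mk_pow_comp_sigma_toAm_eq
    {S T : AnalyticAStructure (PowerSeries ℤ) (Ideal.span {PowerSeries.X}) K O Mx}
    (h : S.σ 0 (toAm _ _ 0 (MvPolynomial.C PowerSeries.X)) =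
      T.σ 0 (toAm _ _ 0 (MvPolynomial.C PowerSeries.X))) (j : ℕ) {m : ℕ} (v : Fin m → O) :
    (Ideal.Quotient.mk (Mx ^ j)).comp
        ((Pi.evalRingHom _ v).comp ((S.σ m).comp (toAm _ _ m))) =
      (Ideal.Quotient.mk (Mx ^ j)).comp
        ((Pi.evalRingHom _ v).comp ((T.σ m).comp (toAm _ _ m))) := by
  refine MvPolynomial.ringHom_ext'
    (PowerSeries.ringHom_ext_of_isNilpotent ?_ ⟨j, ?_⟩) fun i ↦ ?_
  · simp [sigma_toAm_C, h]
  · simp only [RingHom.comp_apply, Pi.evalRingHom_apply, sigma_toAm_C]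
    rw [← map_pow, Ideal.Quotient.eq_zero_iff_mem]
    exact Ideal.pow_mem_pow (S.mem_max _ (Ideal.mem_span_singleton_self _) _) j
  · simp [S.coord, T.coord]

theorem ext_of_sigma_zero_C_X [IsHausdorff Mx O]
    {S T : AnalyticAStructure (PowerSeries ℤ) (Ideal.span {PowerSeries.X}) K O Mx}
    (h : S.σ 0 (toAm _ _ 0 (MvPolynomial.C PowerSeries.X)) =
      T.σ 0 (toAm _ _ 0 (MvPolynomial.C PowerSeries.X))) : S = T := by
  suffices hσ : S.σ = T.σ by
    cases S; cases T; cases hσ; rfl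
  funext m
  refine RingHom.ext fun f ↦ funext fun v ↦ IsHausdorff.eq_of_forall_mk_pow_eq Mx fun j ↦ ?_
  obtain ⟨p, hp⟩ := Ideal.Quotient.mk_surjective (f.1 j)
  have hS := sigma_sub_sigma_toAm_mem_pow PowerSeries.X_ne_zero S hp.symm v
  have hT := sigma_sub_sigma_toAm_mem_pow PowerSeries.X_ne_zero T hp.symm v
  calc Ideal.Quotient.mk (Mx ^ j) (S.σ m f v)
      = Ideal.Quotient.mk (Mx ^ j) (S.σ m (toAm _ _ m p) v) := Ideal.Quotient.eq.mpr hS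
    _ = Ideal.Quotient.mk (Mx ^ j) (T.σ m (toAm _ _ m p) v) :=
        RingHom.congr_fun (mk_pow_comp_sigma_toAm_eq h j v) p
    _ = Ideal.Quotient.mk (Mx ^ j) (T.σ m f v) := (Ideal.Quotient.eq.mpr hT).symm

end AnalyticAStructure

def laurentOEquiv : PowerSeries k ≃+* laurentO k :=
  RingEquiv.ofBijective (HahnSeries.ofPowerSeries ℤ k).rangeRestrict
    ⟨fun _ _ h ↦ HahnSeries.ofPowerSeries_injective (congrArg Subtype.val h),
      RingHom.rangeRestrict_surjective _⟩

theorem coe_laurentOEquiv (p : PowerSeries k) :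
    (laurentOEquiv k p : LaurentSeries k) = HahnSeries.ofPowerSeries ℤ k p := rfl

theorem laurentM_eq_map : laurentM k = (Ideal.span {PowerSeries.X}).map (laurentOEquiv k) := by
  ext x
  simp only [Ideal.mem_map_of_equiv, Ideal.mem_span_singleton, PowerSeries.X_dvd_iff,
    Subtype.ext_iff, coe_laurentOEquiv]
  rfl

instance : IsHausdorff (laurentM k) (laurentO k) := by
  rw [laurentM_eq_map]
  exact (IsHausdorff.congr_ringEquiv _ _).mpr inferInstance

/-- **The uniqueness of analytic `ℤ[[t]]`-structures on `k((t))`** (after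
Definition 2.8 of the paper).  Let `A = ℤ[[t]]` with `I = tℤ[[t]]` and let `k` be any
field.  On `K = k((t))` with its valuation ring `O_K = k[[t]]`, for every element `u`
of the maximal ideal there is exactly one analytic `A`-structure `(σ_m)_m` with
`σ_0(t) = u`. -/
theorem unique_analytic_structure_on_laurent_series
    (u : laurentO k) (hu : u ∈ laurentM k) :
    ∃! S : AnalyticAStructure (PowerSeries ℤ)
        (Ideal.span {(PowerSeries.X : PowerSeries ℤ)})
        (LaurentSeries k) (laurentO k) (laurentM k),
      S.σ 0 (toAm (PowerSeries ℤ) (Ideal.span {(PowerSeries.X : PowerSeries ℤ)}) 0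
        (MvPolynomial.C PowerSeries.X)) = fun _ => u := by
  obtain ⟨w, hw, hwu⟩ := hu
  let S := AnalyticAStructure.ofIsAdicComplete (Ideal.span {PowerSeries.X})
    (PowerSeries.span_X_le_comap_substAlgHom (R := ℤ) hw) (laurentOEquiv k)
    (laurentM_eq_map k).ge
  have hS : S.σ 0 (toAm _ _ 0 (MvPolynomial.C PowerSeries.X)) = fun _ ↦ u := by
    funext v
    rw [AnalyticAStructure.ofIsAdicComplete_sigma_toAm, MvPolynomial.eval₂Hom_C]
    exact Subtype.ext ((coe_laurentOEquiv k _).trans (by rwa [AlgHom.toRingHom_eq_coe,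
      RingHom.coe_coe, PowerSeries.substAlgHom_X]))
  exact ⟨S, hS, fun T hT ↦ AnalyticAStructure.ext_of_sigma_zero_C_X (hT.trans hS.symm)⟩

end LaurentSeriesStructure
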